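/- arXiv:1002.1180 — 5 statements merged into one kernel-verified Lean document; each statement's English description precedes it below -/
import Mathlib

section
/- Let C = (φ,Φ) be a skew-evolution semiflow on Y = X × V. If C is integrally stable and has bounded exponential growth, then C is stable. -/
open MeasureTheory

noncomputable section

/-- An evolution semiflow on `X`: `φ(t,t,x) = x` for `t ≥ 0` and
`φ(t,s,φ(s,t₀,x)) = φ(t,t₀,x)` for `t ≥ s ≥ t₀ ≥ 0`. -/
def IsEvolutionSemiflow {X : Type*} (φ : ℝ → ℝ → X → X) : Prop :=
  (∀ t : ℝ, ∀ x : X, 0 ≤ t → φ t t x = x) ∧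
  (∀ t s t₀ : ℝ, ∀ x : X, 0 ≤ t₀ → t₀ ≤ s → s ≤ t → φ t s (φ s t₀ x) = φ t t₀ x)

/-- An evolution cocycle over an evolution semiflow `φ`:
`Φ(t,t,x) = Id` for `t ≥ 0` and `Φ(t,s,φ(s,t₀,x)) ∘ Φ(s,t₀,x) = Φ(t,t₀,x)`
for `t ≥ s ≥ t₀ ≥ 0`. The pair `(φ, Φ)` is a skew-evolution semiflow. -/
def IsEvolutionCocycle {X V : Type*} [NormedAddCommGroup V] [NormedSpace ℝ V]
    (φ : ℝ → ℝ → X → X) (Φ : ℝ → ℝ → X → V →L[ℝ] V) : Prop :=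
  (∀ t : ℝ, ∀ x : X, 0 ≤ t → Φ t t x = ContinuousLinearMap.id ℝ V) ∧
  (∀ t s t₀ : ℝ, ∀ x : X, 0 ≤ t₀ → t₀ ≤ s → s ≤ t →
    (Φ t s (φ s t₀ x)).comp (Φ s t₀ x) = Φ t t₀ x)

/-- Uniform exponential stability. -/
def IsUnifExpStable {X V : Type*} [NormedAddCommGroup V] [NormedSpace ℝ V]
    (Φ : ℝ → ℝ → X → V →L[ℝ] V) : Prop :=
  ∃ N α : ℝ, 1 ≤ N ∧ 0 < α ∧
    ∀ t s t₀ : ℝ, ∀ x : X, ∀ v : V, 0 ≤ t₀ → t₀ ≤ s → s ≤ t →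
      ‖Φ t t₀ x v‖ ≤ N * Real.exp (-α * (t - s)) * ‖Φ s t₀ x v‖

/-- Barreira-Valls exponential stability. -/
def IsBarreiraVallsExpStable {X V : Type*} [NormedAddCommGroup V] [NormedSpace ℝ V]
    (Φ : ℝ → ℝ → X → V →L[ℝ] V) : Prop :=
  ∃ N α β : ℝ, 1 ≤ N ∧ 0 < α ∧ α ≤ β ∧
    ∀ t s t₀ : ℝ, ∀ x : X, ∀ v : V, 0 ≤ t₀ → t₀ ≤ s → s ≤ t →
      ‖Φ t t₀ x v‖ ≤ N * Real.exp (-α * t) * Real.exp (β * s) * ‖Φ s t₀ x v‖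

/-- (Nonuniform) exponential stability. -/
def IsExpStable {X V : Type*} [NormedAddCommGroup V] [NormedSpace ℝ V]
    (Φ : ℝ → ℝ → X → V →L[ℝ] V) : Prop :=
  ∃ N : ℝ → ℝ, ∃ α : ℝ, (∀ s : ℝ, 1 ≤ N s) ∧ 0 < α ∧
    ∀ t s t₀ : ℝ, ∀ x : X, ∀ v : V, 0 ≤ t₀ → t₀ ≤ s → s ≤ t →
      ‖Φ t t₀ x v‖ ≤ N s * Real.exp (-α * t) * ‖Φ s t₀ x v‖

/-- (Nonuniform) stability. -/
def IsStable {X V : Type*} [NormedAddCommGroup V] [NormedSpace ℝ V]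
    (Φ : ℝ → ℝ → X → V →L[ℝ] V) : Prop :=
  ∃ N : ℝ → ℝ, (∀ s : ℝ, 1 ≤ N s) ∧
    ∀ t s t₀ : ℝ, ∀ x : X, ∀ v : V, 0 ≤ t₀ → t₀ ≤ s → s ≤ t →
      ‖Φ t t₀ x v‖ ≤ N s * ‖Φ s t₀ x v‖

/-- Exponential growth: `M, ω : ℝ₊ → [1,∞)` nondecreasing with
`‖Φ(t,t₀,x)v‖ ≤ M(s) e^{ω(t-s)} ‖Φ(s,t₀,x)v‖` for `t ≥ s ≥ t₀ ≥ 0`. -/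
def HasExpGrowth {X V : Type*} [NormedAddCommGroup V] [NormedSpace ℝ V]
    (Φ : ℝ → ℝ → X → V →L[ℝ] V) : Prop :=
  ∃ M ω : ℝ → ℝ, MonotoneOn M (Set.Ici 0) ∧ MonotoneOn ω (Set.Ici 0) ∧
    (∀ s : ℝ, 0 ≤ s → 1 ≤ M s) ∧ (∀ s : ℝ, 0 ≤ s → 1 ≤ ω s) ∧
    ∀ t s t₀ : ℝ, ∀ x : X, ∀ v : V, 0 ≤ t₀ → t₀ ≤ s → s ≤ t →
      ‖Φ t t₀ x v‖ ≤ M s * Real.exp (ω (t - s)) * ‖Φ s t₀ x v‖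

/-- Bounded exponential growth: exponential growth where `M` can be chosen bounded. -/
def HasBoundedExpGrowth {X V : Type*} [NormedAddCommGroup V] [NormedSpace ℝ V]
    (Φ : ℝ → ℝ → X → V →L[ℝ] V) : Prop :=
  ∃ M ω : ℝ → ℝ, MonotoneOn M (Set.Ici 0) ∧ MonotoneOn ω (Set.Ici 0) ∧
    (∀ s : ℝ, 0 ≤ s → 1 ≤ M s) ∧ (∀ s : ℝ, 0 ≤ s → 1 ≤ ω s) ∧
    (∃ K : ℝ, ∀ s : ℝ, 0 ≤ s → M s ≤ K) ∧
    ∀ t s t₀ : ℝ, ∀ x : X, ∀ v : V, 0 ≤ t₀ → t₀ ≤ s → s ≤ t →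
      ‖Φ t t₀ x v‖ ≤ M s * Real.exp (ω (t - s)) * ‖Φ s t₀ x v‖

/-- Integral stability: `∫_s^∞ ‖Φ(t,t₀,x)v‖ dt ≤ D(s) ‖Φ(s,t₀,x)v‖` for `s ≥ t₀ ≥ 0`. -/
def IsIntegrallyStable {X V : Type*} [NormedAddCommGroup V] [NormedSpace ℝ V]
    (Φ : ℝ → ℝ → X → V →L[ℝ] V) : Prop :=
  ∃ D : ℝ → ℝ, (∀ s : ℝ, 0 ≤ s → 0 < D s) ∧
    ∀ s t₀ : ℝ, ∀ x : X, ∀ v : V, 0 ≤ t₀ → t₀ ≤ s →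
      IntegrableOn (fun t => ‖Φ t t₀ x v‖) (Set.Ioi s) ∧
      ∫ t in Set.Ioi s, ‖Φ t t₀ x v‖ ≤ D s * ‖Φ s t₀ x v‖

/-- Exponential integral stability:
`∫_s^∞ e^{d(t-s)} ‖Φ(t,s,x)v‖ dt ≤ D(s) ‖v‖` for `s ≥ 0`. -/
def IsExpIntegrallyStable {X V : Type*} [NormedAddCommGroup V] [NormedSpace ℝ V]
    (Φ : ℝ → ℝ → X → V →L[ℝ] V) : Prop :=
  ∃ D : ℝ → ℝ, ∃ d : ℝ, (∀ s : ℝ, 0 ≤ s → 0 < D s) ∧ 0 < d ∧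
    ∀ s : ℝ, ∀ x : X, ∀ v : V, 0 ≤ s →
      IntegrableOn (fun t => Real.exp (d * (t - s)) * ‖Φ t s x v‖) (Set.Ioi s) ∧
      ∫ t in Set.Ioi s, Real.exp (d * (t - s)) * ‖Φ t s x v‖ ≤ D s * ‖v‖

/-- Strong measurability: for every `t₀ ≥ 0`, `x`, `v` the map
`s ↦ ‖Φ(s,t₀,x)v‖` is measurable on `[t₀,∞)`. -/
def IsStronglyMeasurable {X V : Type*} [NormedAddCommGroup V] [NormedSpace ℝ V]
    (Φ : ℝ → ℝ → X → V →L[ℝ] V) : Prop :=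
  ∀ t₀ : ℝ, ∀ x : X, ∀ v : V, 0 ≤ t₀ →
    Measurable ((Set.Ici t₀).restrict fun s => ‖Φ s t₀ x v‖)

/-- `*`-strong measurability: for every `t ≥ t₀ ≥ 0`, `x` and `v*` in the dual, the map
`s ↦ ‖Φ(t,s,φ(s,t₀,x))* v*‖` is measurable on `[t₀,t]` (here the adjoint applied to
`g : V →L[ℝ] ℝ` is `g ∘ Φ(t,s,φ(s,t₀,x))`). -/
def IsStarStronglyMeasurable {X V : Type*} [NormedAddCommGroup V] [NormedSpace ℝ V]
    (φ : ℝ → ℝ → X → X) (Φ : ℝ → ℝ → X → V →L[ℝ] V) : Prop :=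
  ∀ t t₀ : ℝ, ∀ x : X, ∀ g : V →L[ℝ] ℝ, 0 ≤ t₀ → t₀ ≤ t →
    Measurable ((Set.Icc t₀ t).restrict fun s => ‖g.comp (Φ t s (φ s t₀ x))‖)

/-! Bounded exponential growth makes `‖Φ(t,t₀,x)v‖` comparable to `‖Φ(τ,t₀,x)v‖` with one
constant `L` whenever `τ ≤ t ≤ τ + 1`. For `t ≥ s + 1`, averaging this over `τ ∈ (t - 1, t]`
bounds `‖Φ(t,t₀,x)v‖` by `L ∫_s^∞ ‖Φ(τ,t₀,x)v‖ dτ ≤ L D(s) ‖Φ(s,t₀,x)v‖`; for `t ≤ s + 1`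
the comparison applies directly. -/

def HasUnitWindowGrowthBound {X V : Type*} [NormedAddCommGroup V] [NormedSpace ℝ V]
    (Φ : ℝ → ℝ → X → V →L[ℝ] V) (L : ℝ) : Prop :=
  ∀ t s t₀ : ℝ, ∀ x : X, ∀ v : V, 0 ≤ t₀ → t₀ ≤ s → s ≤ t → t ≤ s + 1 →
    ‖Φ t t₀ x v‖ ≤ L * ‖Φ s t₀ x v‖

section

variable {X V : Type*} [NormedAddCommGroup V] [NormedSpace ℝ V] {Φ : ℝ → ℝ → X → V →L[ℝ] V}

theorem HasBoundedExpGrowth.exists_hasUnitWindowGrowthBound (hg : HasBoundedExpGrowth Φ) :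
    ∃ L, 1 ≤ L ∧ HasUnitWindowGrowthBound Φ L := by
  obtain ⟨M, ω, -, hω, hM1, hω1, ⟨K, hK⟩, hgr⟩ := hg
  have hK1 : 1 ≤ K := (hM1 0 le_rfl).trans (hK 0 le_rfl)
  have hexp1 : 1 ≤ Real.exp (ω 1) := Real.one_le_exp (zero_le_one.trans (hω1 1 zero_le_one))
  refine ⟨K * Real.exp (ω 1), one_le_mul_of_one_le_of_one_le hK1 hexp1, ?_⟩
  intro t s t₀ x v ht₀ hst₀ hst hts
  have hs : 0 ≤ s := ht₀.trans hst₀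
  have hω_le : ω (t - s) ≤ ω 1 :=
    hω (Set.mem_Ici.2 (sub_nonneg.2 hst)) (Set.mem_Ici.2 zero_le_one) (by linarith)
  calc ‖Φ t t₀ x v‖ ≤ M s * Real.exp (ω (t - s)) * ‖Φ s t₀ x v‖ := hgr t s t₀ x v ht₀ hst₀ hst
    _ ≤ K * Real.exp (ω 1) * ‖Φ s t₀ x v‖ := by
      gcongr
      exact hK s hs

theorem HasUnitWindowGrowthBound.norm_le_of_add_one_le {L : ℝ} (hL : HasUnitWindowGrowthBound Φ L)
    (hL0 : 0 ≤ L) {s t₀ t : ℝ} {x : X} {v : V} (ht₀ : 0 ≤ t₀) (hst₀ : t₀ ≤ s) (hst : s + 1 ≤ t)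
    (hint : IntegrableOn (fun τ => ‖Φ τ t₀ x v‖) (Set.Ioi s)) :
    ‖Φ t t₀ x v‖ ≤ L * ∫ τ in Set.Ioi s, ‖Φ τ t₀ x v‖ := by
  have hwindow : Set.Ioc (t - 1) t ⊆ Set.Ioi s := fun τ hτ => by
    simp only [Set.mem_Ioi]; linarith [hτ.1]
  have hpointwise : ∀ τ ∈ Set.Ioc (t - 1) t, ‖Φ t t₀ x v‖ ≤ L * ‖Φ τ t₀ x v‖ := fun τ hτ =>
    hL t τ t₀ x v ht₀ (by linarith [hτ.1]) hτ.2 (by linarith [hτ.1])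
  have hvol : volume.real (Set.Ioc (t - 1) t) = 1 := by simp [Real.volume_real_Ioc]
  calc ‖Φ t t₀ x v‖ = ‖Φ t t₀ x v‖ * volume.real (Set.Ioc (t - 1) t) := by rw [hvol, mul_one]
    _ ≤ ∫ τ in Set.Ioc (t - 1) t, L * ‖Φ τ t₀ x v‖ :=
      setIntegral_ge_of_const_le_real measurableSet_Ioc (by simp [Real.volume_Ioc]) hpointwise
        ((hint.mono_set hwindow).const_mul L)
    _ = L * ∫ τ in Set.Ioc (t - 1) t, ‖Φ τ t₀ x v‖ := integral_const_mul L _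
    _ ≤ L * ∫ τ in Set.Ioi s, ‖Φ τ t₀ x v‖ :=
      mul_le_mul_of_nonneg_left (setIntegral_mono_set hint
        (Filter.Eventually.of_forall fun _ => norm_nonneg _) hwindow.eventuallyLE) hL0

end

theorem stmt0_general {X V : Type*} [NormedAddCommGroup V] [NormedSpace ℝ V]
    (Φ : ℝ → ℝ → X → V →L[ℝ] V)
    (his : IsIntegrallyStable Φ) (hg : HasBoundedExpGrowth Φ) :
    IsStable Φ := by
  obtain ⟨D, -, hD⟩ := his
  obtain ⟨L, hL1, hL⟩ := hg.exists_hasUnitWindowGrowthBound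
  refine ⟨fun s => L * max (D s) 1, fun s => one_le_mul_of_one_le_of_one_le hL1 (le_max_right _ _),
    fun t s t₀ x v ht₀ hst₀ hst => ?_⟩
  rcases le_or_gt t (s + 1) with hts | hts
  · have hN : L ≤ L * max (D s) 1 := le_mul_of_one_le_right (by linarith) (le_max_right _ _)
    exact (hL t s t₀ x v ht₀ hst₀ hst hts).trans (by gcongr)
  · obtain ⟨hint, hbound⟩ := hD s t₀ x v ht₀ hst₀
    calc ‖Φ t t₀ x v‖ ≤ L * ∫ τ in Set.Ioi s, ‖Φ τ t₀ x v‖ :=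
          hL.norm_le_of_add_one_le (by linarith) ht₀ hst₀ hts.le hint
      _ ≤ L * (D s * ‖Φ s t₀ x v‖) := by gcongr
      _ ≤ L * max (D s) 1 * ‖Φ s t₀ x v‖ := by
        rw [mul_assoc]; gcongr; exact le_max_left _ _

/-- Proposition: an integrally stable skew-evolution semiflow with bounded
exponential growth is stable. -/
theorem stmt0 {X V : Type*} [MetricSpace X]
    [NormedAddCommGroup V] [NormedSpace ℝ V] [CompleteSpace V]
    (φ : ℝ → ℝ → X → X) (Φ : ℝ → ℝ → X → V →L[ℝ] V)
    (hφ : IsEvolutionSemiflow φ) (hΦ : IsEvolutionCocycle φ Φ)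
    (his : IsIntegrallyStable Φ) (hg : HasBoundedExpGrowth Φ) :
    IsStable Φ :=
  stmt0_general Φ his hg
end
end

section
/- Let C = (φ,Φ) be a strongly measurable skew-evolution semiflow with bounded exponential growth. Then C is exponentially stable if and only if C is exponentially integrally stable. -/
open MeasureTheory

noncomputable section

/-!
The cocycle identity reduces both notions to initial time `t₀ = s`. If `‖Φ(t,s,x)w‖` decays
like `N(s) e^{-αt} ‖w‖`, then the weight `e^{d(t-s)}` with `d = α/2` leaves an integrable
exponential. Conversely (Datko's argument), bounded exponential growth makes `‖Φ(t,s,x)w‖`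
at most `L ‖Φ(τ,s,x)w‖` for every `τ ∈ [t-1,t]` with `L` independent of `s`, so averaging the
weighted integrand over that unit window bounds `e^{d(t-1-s)} ‖Φ(t,s,x)w‖` by `L D(s) ‖w‖`.
-/

open Set Real

lemma integrableOn_Ioi_and_setIntegral_le_of_le_exp_mul {f : ℝ → ℝ} {s a c : ℝ} (ha : a < 0)
    (hf : AEStronglyMeasurable f (volume.restrict (Ioi s))) (hf0 : ∀ t ∈ Ioi s, 0 ≤ f t)
    (hle : ∀ t ∈ Ioi s, f t ≤ c * exp (a * t)) :
    IntegrableOn f (Ioi s) ∧ ∫ t in Ioi s, f t ≤ -c * exp (a * s) / a := by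
  have hexp : IntegrableOn (fun t => c * exp (a * t)) (Ioi s) :=
    (integrableOn_exp_mul_Ioi ha s).const_mul c
  have hint : IntegrableOn f (Ioi s) :=
    hexp.mono' hf <| ae_restrict_of_forall_mem measurableSet_Ioi fun t ht => by
      rw [Real.norm_of_nonneg (hf0 t ht)]
      exact hle t ht
  refine ⟨hint, ?_⟩
  calc ∫ t in Ioi s, f t ≤ ∫ t in Ioi s, c * exp (a * t) :=
        setIntegral_mono_on hint hexp measurableSet_Ioi hle
    _ = -c * exp (a * s) / a := by rw [integral_const_mul, integral_exp_mul_Ioi ha]; ring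

lemma mul_le_setIntegral_Ioi_of_le_on_Ioc {g : ℝ → ℝ} {s u w a : ℝ} (hsu : s ≤ u) (huw : u ≤ w)
    (hg : IntegrableOn g (Ioi s)) (hg0 : ∀ τ ∈ Ioi s, 0 ≤ g τ) (ha : ∀ τ ∈ Ioc u w, a ≤ g τ) :
    (w - u) * a ≤ ∫ τ in Ioi s, g τ := by
  have hsub : Ioc u w ⊆ Ioi s := fun τ hτ => lt_of_le_of_lt hsu hτ.1
  calc (w - u) * a = ∫ _ in Ioc u w, a := by
        rw [setIntegral_const, measureReal_def, Real.volume_Ioc,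
          ENNReal.toReal_ofReal (sub_nonneg.2 huw), smul_eq_mul]
    _ ≤ ∫ τ in Ioc u w, g τ :=
        setIntegral_mono_on (integrableOn_const (by simp)) (hg.mono_set hsub) measurableSet_Ioc ha
    _ ≤ ∫ τ in Ioi s, g τ :=
        setIntegral_mono_set hg (ae_restrict_of_forall_mem measurableSet_Ioi hg0) hsub.eventuallyLE

lemma mul_exp_le_of_setIntegral_exp_mul_le {u : ℝ → ℝ} {s t d L B : ℝ} (hd : 0 ≤ d) (hL : 0 ≤ L)
    (hst : s + 1 ≤ t) (hu0 : ∀ τ ∈ Ioi s, 0 ≤ u τ) (hu : ∀ τ ∈ Ioc (t - 1) t, u t ≤ L * u τ)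
    (hint : IntegrableOn (fun τ => exp (d * (τ - s)) * u τ) (Ioi s))
    (hB : ∫ τ in Ioi s, exp (d * (τ - s)) * u τ ≤ B) :
    u t * exp (d * (t - 1 - s)) ≤ L * B := by
  have hwindow : ∀ τ ∈ Ioc (t - 1) t,
      u t * exp (d * (t - 1 - s)) ≤ L * (exp (d * (τ - s)) * u τ) := by
    intro τ hτ
    have hτs : s < τ := by linarith [hτ.1]
    calc u t * exp (d * (t - 1 - s)) ≤ L * u τ * exp (d * (τ - s)) :=
          mul_le_mul (hu τ hτ) (exp_le_exp.2 (by nlinarith [hτ.1]))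
            (exp_pos _).le (mul_nonneg hL (hu0 τ hτs))
      _ = L * (exp (d * (τ - s)) * u τ) := by ring
  have hnonneg : ∀ τ ∈ Ioi s, 0 ≤ L * (exp (d * (τ - s)) * u τ) := fun τ hτ =>
    mul_nonneg hL (mul_nonneg (exp_pos _).le (hu0 τ hτ))
  have := mul_le_setIntegral_Ioi_of_le_on_Ioc (by linarith) (by linarith)
    (hint.const_mul L) hnonneg hwindow
  rw [sub_sub_cancel, one_mul, integral_const_mul] at this
  exact this.trans (mul_le_mul_of_nonneg_left hB hL)

section SkewEvolutionSemiflow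

variable {X V : Type*} [NormedAddCommGroup V] [NormedSpace ℝ V] {φ : ℝ → ℝ → X → X}
  {Φ : ℝ → ℝ → X → V →L[ℝ] V}

lemma IsStronglyMeasurable.aestronglyMeasurable_restrict_Ici (hm : IsStronglyMeasurable Φ)
    {t₀ : ℝ} (ht₀ : 0 ≤ t₀) (x : X) (v : V) :
    AEStronglyMeasurable (fun t => ‖Φ t t₀ x v‖) (volume.restrict (Ici t₀)) :=
  (aemeasurable_restrict_of_measurable_subtype measurableSet_Ici
    (hm t₀ x v ht₀)).aestronglyMeasurable

lemma HasBoundedExpGrowth.exists_norm_le_of_le_add (hg : HasBoundedExpGrowth Φ) (h : ℝ) :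
    ∃ L : ℝ, 0 < L ∧ ∀ t τ t₀ : ℝ, ∀ x : X, ∀ v : V, 0 ≤ t₀ → t₀ ≤ τ → τ ≤ t → t ≤ τ + h →
      ‖Φ t t₀ x v‖ ≤ L * ‖Φ τ t₀ x v‖ := by
  obtain ⟨M, ω, -, hω, hM1, -, ⟨K, hK⟩, hgrowth⟩ := hg
  have hK1 : 1 ≤ K := (hM1 0 le_rfl).trans (hK 0 le_rfl)
  refine ⟨K * exp (ω h), by positivity, fun t τ t₀ x v ht₀ ht₀τ hτt hth => ?_⟩
  have hτ : 0 ≤ τ := ht₀.trans ht₀τ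
  have hωh : ω (t - τ) ≤ ω h :=
    hω (mem_Ici.2 (by linarith)) (mem_Ici.2 (by linarith)) (by linarith)
  calc ‖Φ t t₀ x v‖ ≤ M τ * exp (ω (t - τ)) * ‖Φ τ t₀ x v‖ := hgrowth t τ t₀ x v ht₀ ht₀τ hτt
    _ ≤ K * exp (ω h) * ‖Φ τ t₀ x v‖ := by
        gcongr
        exact hK τ hτ

lemma IsEvolutionCocycle.isExpStable_iff (hΦ : IsEvolutionCocycle φ Φ) :
    IsExpStable Φ ↔ ∃ N : ℝ → ℝ, ∃ α : ℝ, (∀ s : ℝ, 1 ≤ N s) ∧ 0 < α ∧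
      ∀ t s : ℝ, ∀ x : X, ∀ v : V, 0 ≤ s → s ≤ t → ‖Φ t s x v‖ ≤ N s * exp (-α * t) * ‖v‖ := by
  constructor
  · rintro ⟨N, α, hN, hα, hS⟩
    refine ⟨N, α, hN, hα, fun t s x v hs hst => ?_⟩
    simpa [hΦ.1 s x hs] using hS t s s x v hs le_rfl hst
  · rintro ⟨N, α, hN, hα, hS⟩
    refine ⟨N, α, hN, hα, fun t s t₀ x v ht₀ ht₀s hst => ?_⟩
    rw [← hΦ.2 t s t₀ x ht₀ ht₀s hst]
    exact hS t s _ _ (ht₀.trans ht₀s) hst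

theorem IsExpStable.isExpIntegrallyStable (hΦ : IsEvolutionCocycle φ Φ)
    (hm : IsStronglyMeasurable Φ) (h : IsExpStable Φ) : IsExpIntegrallyStable Φ := by
  obtain ⟨N, α, hN, hα, hS⟩ := hΦ.isExpStable_iff.1 h
  have hN0 : ∀ s, 0 < N s := fun s => zero_lt_one.trans_le (hN s)
  refine ⟨fun s => N s * exp (-α * s) / (α / 2), α / 2, fun s _ => by have := hN0 s; positivity,
    half_pos hα, fun s x v hs => ?_⟩
  have hmeas : AEStronglyMeasurable (fun t => exp (α / 2 * (t - s)) * ‖Φ t s x v‖)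
      (volume.restrict (Ioi s)) :=
    (continuous_exp.comp (by fun_prop)).aestronglyMeasurable.mul
      ((hm.aestronglyMeasurable_restrict_Ici hs x v).mono_set Ioi_subset_Ici_self)
  have hdecay : ∀ t ∈ Ioi s, exp (α / 2 * (t - s)) * ‖Φ t s x v‖
      ≤ N s * ‖v‖ * exp (-(α / 2) * s) * exp (-(α / 2) * t) := by
    intro t ht
    have hexp : exp (α / 2 * (t - s)) * exp (-α * t) = exp (-(α / 2) * s) * exp (-(α / 2) * t) := by
      rw [← exp_add, ← exp_add]; ring_nf
    calc exp (α / 2 * (t - s)) * ‖Φ t s x v‖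
        ≤ exp (α / 2 * (t - s)) * (N s * exp (-α * t) * ‖v‖) :=
          mul_le_mul_of_nonneg_left (hS t s x v hs (le_of_lt ht)) (exp_pos _).le
      _ = N s * ‖v‖ * exp (-(α / 2) * s) * exp (-(α / 2) * t) := by
          linear_combination (N s * ‖v‖) * hexp
  obtain ⟨hint, hbound⟩ := integrableOn_Ioi_and_setIntegral_le_of_le_exp_mul
    (neg_lt_zero.2 (half_pos hα)) hmeas (fun t _ => by positivity) hdecay
  refine ⟨hint, hbound.trans_eq ?_⟩
  have hsq : exp (-α * s) = exp (-(α / 2) * s) * exp (-(α / 2) * s) := by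
    rw [← exp_add]; ring_nf
  change _ = N s * exp (-α * s) / (α / 2) * ‖v‖
  rw [hsq]
  field_simp

theorem IsExpIntegrallyStable.isExpStable (hΦ : IsEvolutionCocycle φ Φ)
    (hg : HasBoundedExpGrowth Φ) (h : IsExpIntegrallyStable Φ) : IsExpStable Φ := by
  obtain ⟨D, d, -, hd, hI⟩ := h
  obtain ⟨L, hL, hwindow⟩ := hg.exists_norm_le_of_le_add 1
  refine hΦ.isExpStable_iff.2 ⟨fun s => max 1 (L * max 1 (D s) * exp (d * (s + 1))), d,
    fun s => le_max_left _ _, hd, fun t s x w hs hst => ?_⟩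
  have hD : D s * ‖w‖ ≤ max 1 (D s) * ‖w‖ := by gcongr; exact le_max_right _ _
  have key : ‖Φ t s x w‖ ≤ L * (max 1 (D s) * ‖w‖) * exp (-d * (t - 1 - s)) := by
    rcases le_or_gt t (s + 1) with hnear | hfar
    · calc ‖Φ t s x w‖ ≤ L * ‖Φ s s x w‖ := hwindow t s s x w hs le_rfl hst hnear
        _ = L * (1 * ‖w‖) * 1 := by simp [hΦ.1 s x hs]
        _ ≤ L * (max 1 (D s) * ‖w‖) * exp (-d * (t - 1 - s)) := by
            gcongr
            · exact le_max_left _ _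
            · exact one_le_exp (by nlinarith)
    · obtain ⟨hint, hB⟩ := hI s x w hs
      have := mul_exp_le_of_setIntegral_exp_mul_le hd.le hL.le hfar.le
        (fun τ _ => norm_nonneg (Φ τ s x w))
        (fun τ hτ => hwindow t τ s x w hs (by linarith [hτ.1]) hτ.2 (by linarith [hτ.1]))
        hint (hB.trans hD)
      rw [← le_div_iff₀ (exp_pos _), div_eq_mul_inv, ← exp_neg] at this
      simpa only [neg_mul] using this
  calc ‖Φ t s x w‖ ≤ L * (max 1 (D s) * ‖w‖) * exp (-d * (t - 1 - s)) := key
    _ = L * max 1 (D s) * exp (d * (s + 1)) * exp (-d * t) * ‖w‖ := by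
        rw [show -d * (t - 1 - s) = d * (s + 1) + -d * t by ring, exp_add]; ring
    _ ≤ max 1 (L * max 1 (D s) * exp (d * (s + 1))) * exp (-d * t) * ‖w‖ := by
        gcongr; exact le_max_right _ _

end SkewEvolutionSemiflow

theorem stmt1_general {X V : Type*}
    [NormedAddCommGroup V] [NormedSpace ℝ V]
    (φ : ℝ → ℝ → X → X) (Φ : ℝ → ℝ → X → V →L[ℝ] V)
    (hΦ : IsEvolutionCocycle φ Φ)
    (hm : IsStronglyMeasurable Φ) (hg : HasBoundedExpGrowth Φ) :
    IsExpStable Φ ↔ IsExpIntegrallyStable Φ :=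
  ⟨IsExpStable.isExpIntegrallyStable hΦ hm, IsExpIntegrallyStable.isExpStable hΦ hg⟩

/-- Datko-type theorem: a strongly measurable skew-evolution semiflow with bounded
exponential growth is exponentially stable iff it is exponentially integrally stable. -/
theorem stmt1 {X V : Type*} [MetricSpace X]
    [NormedAddCommGroup V] [NormedSpace ℝ V] [CompleteSpace V]
    (φ : ℝ → ℝ → X → X) (Φ : ℝ → ℝ → X → V →L[ℝ] V)
    (hφ : IsEvolutionSemiflow φ) (hΦ : IsEvolutionCocycle φ Φ)
    (hm : IsStronglyMeasurable Φ) (hg : HasBoundedExpGrowth Φ) :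
    IsExpStable Φ ↔ IsExpIntegrallyStable Φ :=
  stmt1_general φ Φ hΦ hm hg
end
end

section
/- A strongly measurable skew-evolution semiflow C = (φ,Φ) is integrally stable if and only if there exists a map D : ℝ₊ → (0,∞) such that ∫_s^∞ ‖Φ(t,s,x)v‖ dt ≤ D(s)‖v‖ for all s ≥ 0 and all (x,v) ∈ X × V. -/
open MeasureTheory

noncomputable section

/-- A strongly measurable skew-evolution semiflow is integrally stable iff there
exists `D : ℝ₊ → (0,∞)` with `∫_s^∞ ‖Φ(t,s,x)v‖ dt ≤ D(s) ‖v‖` for all `s ≥ 0`. -/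
theorem stmt13 {X V : Type*} [MetricSpace X]
    [NormedAddCommGroup V] [NormedSpace ℝ V] [CompleteSpace V]
    (φ : ℝ → ℝ → X → X) (Φ : ℝ → ℝ → X → V →L[ℝ] V)
    (hφ : IsEvolutionSemiflow φ) (hΦ : IsEvolutionCocycle φ Φ)
    (hm : IsStronglyMeasurable Φ) :
    IsIntegrallyStable Φ ↔
      ∃ D : ℝ → ℝ, (∀ s : ℝ, 0 ≤ s → 0 < D s) ∧
        ∀ s : ℝ, ∀ x : X, ∀ v : V, 0 ≤ s →
          IntegrableOn (fun t => ‖Φ t s x v‖) (Set.Ioi s) ∧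
          ∫ t in Set.Ioi s, ‖Φ t s x v‖ ≤ D s * ‖v‖ := by
  constructor
  · rintro ⟨D, hD, h⟩
    refine ⟨D, hD, fun s x v hs => ?_⟩
    have := h s s x v hs le_rfl
    rwa [hΦ.1 s x hs] at this
  · rintro ⟨D, hD, h⟩
    refine ⟨D, hD, fun s t₀ x v ht₀ hts => ?_⟩
    have key : ∀ t ∈ Set.Ioi s, ‖Φ t t₀ x v‖ = ‖Φ t s (φ s t₀ x) (Φ s t₀ x v)‖ := by
      intro t ht
      rw [← hΦ.2 t s t₀ x ht₀ hts (le_of_lt ht)]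
      rfl
    have hs0 : (0:ℝ) ≤ s := le_trans ht₀ hts
    obtain ⟨hint, hle⟩ := h s (φ s t₀ x) (Φ s t₀ x v) hs0
    constructor
    · exact hint.congr_fun (fun t ht => (key t ht).symm) measurableSet_Ioi
    · calc ∫ t in Set.Ioi s, ‖Φ t t₀ x v‖
          = ∫ t in Set.Ioi s, ‖Φ t s (φ s t₀ x) (Φ s t₀ x v)‖ :=
            setIntegral_congr_fun measurableSet_Ioi key
        _ ≤ D s * ‖Φ s t₀ x v‖ := hle
end
end

section
/- Let X = ℝ₊, V = ℝ, let φ(t,s,x) = t − s + x, let u : ℝ₊ → ℝ be defined by u(t) = e^{2t − t·sin t}, and let Φ_u(t,s,x)v = (u(s)/u(t))·v for t ≥ s ≥ 0, x ∈ ℝ₊, v ∈ ℝ. Then C_u = (φ,Φ_u) is a skew-evolution semiflow which is Barreira-Valls exponentially stable but is not uniformly exponentially stable. -/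
open MeasureTheory

noncomputable section

/-- The function `u(t) = e^{2t - t sin t}`. -/
def u14 (t : ℝ) : ℝ := Real.exp (2 * t - t * Real.sin t)

/-- The cocycle `Φ_u(t,s,x)v = (u(s)/u(t)) v` over `φ(t,s,x) = t - s + x`. -/
def Phi14 (t s : ℝ) (_ : ℝ) : ℝ →L[ℝ] ℝ :=
  (u14 s / u14 t) • ContinuousLinearMap.id ℝ ℝ


lemma u14_pos (t : ℝ) : 0 < u14 t := Real.exp_pos _

lemma Phi14_apply (t s x v : ℝ) : Phi14 t s x v = (u14 s / u14 t) * v := rfl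

lemma Phi14_norm (t s x v : ℝ) : ‖Phi14 t s x v‖ = (u14 s / u14 t) * ‖v‖ := by
  rw [Phi14_apply]
  rw [norm_mul, Real.norm_of_nonneg (div_nonneg (u14_pos s).le (u14_pos t).le)]

/-- With `φ(t,s,x) = t - s + x` and `Φ_u(t,s,x)v = (u(s)/u(t))v`, `u(t) = e^{2t - t sin t}`,
the pair `C_u = (φ, Φ_u)` is a skew-evolution semiflow which is Barreira-Valls
exponentially stable but not uniformly exponentially stable. -/
theorem stmt14 :
    IsEvolutionSemiflow (fun t s x : ℝ => t - s + x) ∧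
    IsEvolutionCocycle (fun t s x : ℝ => t - s + x) Phi14 ∧
    IsBarreiraVallsExpStable Phi14 ∧
    ¬ IsUnifExpStable Phi14 := by
  have hsem : IsEvolutionSemiflow (fun t s x : ℝ => t - s + x) := by
    constructor
    · intro t x _; ring
    · intro t s t₀ x _ _ _; ring
  refine ⟨hsem, ⟨?_, ?_⟩, ?_, ?_⟩
  · intro t x _
    ext v
    simp [Phi14, div_self (u14_pos t).ne']
  · intro t s t₀ x _ _ _
    ext v
    simp only [ContinuousLinearMap.comp_apply, Phi14_apply]
    field_simp [(u14_pos s).ne', (u14_pos t).ne', (u14_pos t₀).ne']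
  · refine ⟨1, 1, 3, le_refl 1, one_pos, by norm_num, ?_⟩
    intro t s t₀ x v h0 h1 h2
    rw [Phi14_norm, Phi14_norm]
    rw [one_mul]
    have hs : 0 ≤ s := le_trans h0 h1
    have key : u14 t₀ / u14 t ≤ Real.exp (-1 * t) * Real.exp (3 * s) * (u14 t₀ / u14 s) := by
      rw [div_le_iff₀ (u14_pos t)]
      have h1s : Real.sin s ≤ 1 := Real.sin_le_one s
      have h2s : -1 ≤ Real.sin s := Real.neg_one_le_sin s
      have h1t : Real.sin t ≤ 1 := Real.sin_le_one t
      have h2t : -1 ≤ Real.sin t := Real.neg_one_le_sin t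
      have ht : 0 ≤ t := le_trans hs h2
      rw [show Real.exp (-1*t) * Real.exp (3*s) * (u14 t₀ / u14 s) * u14 t
           = u14 t₀ * (Real.exp (-1*t) * Real.exp (3*s) * u14 t / u14 s) by ring]
      have : 1 ≤ Real.exp (-1*t) * Real.exp (3*s) * u14 t / u14 s := by
        rw [le_div_iff₀ (u14_pos s), one_mul, u14, u14, ← Real.exp_add, ← Real.exp_add]
        apply Real.exp_le_exp.2
        nlinarith
      nlinarith [(u14_pos t₀).le, this]
    calc u14 t₀ / u14 t * ‖v‖ ≤ Real.exp (-1 * t) * Real.exp (3 * s) * (u14 t₀ / u14 s) * ‖v‖ := by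
          exact mul_le_mul_of_nonneg_right key (norm_nonneg v)
      _ = Real.exp (-1 * t) * Real.exp (3 * s) * (u14 t₀ / u14 s * ‖v‖) := by ring
  · rintro ⟨N, α, hN, hα, H⟩
    obtain ⟨n, hn⟩ := exists_nat_gt ((Real.log N + 2 * Real.pi) / (4 * Real.pi))
    have hπ := Real.pi_pos
    set s : ℝ := -(Real.pi/2) + ((n:ℝ)+1) * (2 * Real.pi) with hs_def
    set t : ℝ := Real.pi/2 + ((n:ℝ)+1) * (2 * Real.pi) with ht_def
    have hcast : ((n:ℝ)+1) * (2 * Real.pi) = ((n+1:ℕ):ℝ) * (2 * Real.pi) := by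
      push_cast; ring
    have hn1 : (1:ℝ) ≤ (n:ℝ)+1 := by
      have : (0:ℝ) ≤ (n:ℝ) := Nat.cast_nonneg n
      linarith
    have h2π : 2*Real.pi ≤ ((n:ℝ)+1)*(2*Real.pi) :=
      le_mul_of_one_le_left (by positivity) hn1
    have hs0 : 0 ≤ s := by rw [hs_def]; linarith
    have hst : s ≤ t := by rw [hs_def, ht_def]; linarith
    have key := H t s s 0 1 hs0 le_rfl hst
    rw [Phi14_norm, Phi14_norm, div_self (u14_pos s).ne'] at key
    simp only [norm_one, mul_one] at key
    have hsins : Real.sin s = -1 := by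
      rw [hs_def, hcast, Real.sin_add_nat_mul_two_pi, Real.sin_neg,
        Real.sin_pi_div_two]
    have hsint : Real.sin t = 1 := by
      rw [ht_def, hcast, Real.sin_add_nat_mul_two_pi, Real.sin_pi_div_two]
    have hls : u14 s / u14 t = Real.exp (3*s - t) := by
      rw [u14, u14, hsins, hsint, ← Real.exp_sub]
      ring_nf
    rw [hls] at key
    have hts : t - s = Real.pi := by rw [ht_def, hs_def]; ring
    rw [hts] at key
    have hNe : N * Real.exp (-α * Real.pi) ≤ N := by
      have h1 : Real.exp (-α * Real.pi) ≤ 1 :=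
        Real.exp_le_one_iff.2 (by nlinarith)
      nlinarith
    have hNlt : N < Real.exp (3*s - t) := by
      have h3 : 3*s - t = 4 * Real.pi * ((n:ℝ)+1) - 2 * Real.pi := by
        rw [hs_def, ht_def]; ring
      rw [h3]
      have hlog : Real.log N < 4 * Real.pi * ((n:ℝ)+1) - 2 * Real.pi := by
        have h4 := (div_lt_iff₀ (by positivity : (0:ℝ) < 4*Real.pi)).1 hn
        nlinarith
      calc N = Real.exp (Real.log N) := (Real.exp_log (by linarith)).symm
        _ < _ := Real.exp_lt_exp.2 hlog
    linarith
end
end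

section
/- There exists a skew-evolution semiflow C = (φ,Φ) (with X = ℝ₊ and V = ℝ) which is exponentially stable but is not Barreira-Valls exponentially stable. -/
open MeasureTheory

noncomputable section

/-- Auxiliary: `myg z t = t` before time `z`, then jumps to `z^2` and is `max t (z^2)` after. -/
def myg (z t : ℝ) : ℝ := if t < z then t else max t (z ^ 2)

lemma myg_ge (z t : ℝ) : t ≤ myg z t := by
  unfold myg; split
  · exact le_rfl
  · exact le_max_left _ _

lemma myg_le (z s : ℝ) (hz : 0 ≤ z) (hs : 0 ≤ s) : myg z s ≤ s ^ 2 + s + 1 := by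
  unfold myg; split
  · nlinarith [sq_nonneg s]
  · have hzs : z ≤ s := not_lt.1 (by assumption)
    exact max_le (by nlinarith [sq_nonneg s]) (by nlinarith)

/-- There exists a skew-evolution semiflow (with `X = ℝ₊` and `V = ℝ`) which is
exponentially stable but not Barreira-Valls exponentially stable. -/
theorem stmt17 :
    ∃ (φ : ℝ → ℝ → {y : ℝ // 0 ≤ y} → {y : ℝ // 0 ≤ y})
      (Φ : ℝ → ℝ → {y : ℝ // 0 ≤ y} → ℝ →L[ℝ] ℝ),
      IsEvolutionSemiflow φ ∧ IsEvolutionCocycle φ Φ ∧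
        IsExpStable Φ ∧ ¬ IsBarreiraVallsExpStable Φ := by
  classical
  refine ⟨fun _ _ x => x,
    fun t s x => Real.exp (myg x.1 s - myg x.1 t) • ContinuousLinearMap.id ℝ ℝ,
    ⟨fun _ _ _ => rfl, fun _ _ _ _ _ _ _ => rfl⟩, ?_, ?_, ?_⟩
  · constructor
    · intro t x _
      simp
    · intro t s t₀ x _ _ _
      ext
      simp only [ContinuousLinearMap.comp_apply, ContinuousLinearMap.smul_apply,
        ContinuousLinearMap.id_apply, smul_eq_mul, ← mul_assoc, ← Real.exp_add]
      congr 1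
      ring
  · refine ⟨fun s => Real.exp (s ^ 2 + s + 1), 1, fun s => Real.one_le_exp (by nlinarith [sq_nonneg (2*s+1)]), one_pos, ?_⟩
    intro t s t₀ x v ht₀ hts hst
    have hs0 : 0 ≤ s := le_trans ht₀ hts
    have h1 := myg_ge x.1 t
    have h2 := myg_le x.1 s x.2 hs0
    have key : Real.exp (myg x.1 t₀ - myg x.1 t) ≤
        Real.exp (s ^ 2 + s + 1) * Real.exp (-1 * t) * Real.exp (myg x.1 t₀ - myg x.1 s) := by
      rw [← Real.exp_add, ← Real.exp_add, Real.exp_le_exp]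
      linarith
    simp only [ContinuousLinearMap.smul_apply, ContinuousLinearMap.id_apply, norm_smul,
      Real.norm_eq_abs, Real.abs_exp]
    calc Real.exp (myg x.1 t₀ - myg x.1 t) * ‖v‖
        ≤ Real.exp (s ^ 2 + s + 1) * Real.exp (-1 * t) * Real.exp (myg x.1 t₀ - myg x.1 s) * ‖v‖ :=
          mul_le_mul_of_nonneg_right key (norm_nonneg v)
      _ = Real.exp (s ^ 2 + s + 1) * Real.exp (-1 * t) *
            (Real.exp (myg x.1 t₀ - myg x.1 s) * ‖v‖) := by ring
  · rintro ⟨N, α, β, hN, hα, hαβ, h⟩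
    have hN0 : (0:ℝ) < N := lt_of_lt_of_le one_pos hN
    have hlog : 0 ≤ Real.log N := Real.log_nonneg hN
    set z : ℝ := max 1 ((β + Real.log N) / α + 1) with hzdef
    have hz1 : 1 ≤ z := le_max_left _ _
    have hz0 : (0:ℝ) ≤ z := by linarith
    have hzz : z ≤ z ^ 2 := by nlinarith
    have h3 : β + Real.log N + α ≤ α * z := by
      have h2 : (β + Real.log N) / α + 1 ≤ z := le_max_right _ _
      rw [← div_le_iff₀' hα]
      calc (β + Real.log N + α) / α = (β + Real.log N) / α + 1 := by field_simp
        _ ≤ z := h2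
    have key : β * z + Real.log N < α * z ^ 2 := by
      nlinarith [mul_le_mul_of_nonneg_right h3 hz0,
        mul_nonneg (by linarith : (0:ℝ) ≤ Real.log N + α) (by linarith : (0:ℝ) ≤ z - 1)]
    have hmain := h (z ^ 2) z z ⟨z, hz0⟩ 1 hz0 le_rfl hzz
    have e1 : myg z z = z ^ 2 := by
      unfold myg
      rw [if_neg (lt_irrefl z), max_eq_right hzz]
    have e2 : myg z (z ^ 2) = z ^ 2 := by
      unfold myg
      rw [if_neg (not_lt.2 hzz), max_self]
    simp only [Subtype.coe_mk, e1, e2, sub_self, Real.exp_zero, one_smul, ContinuousLinearMap.id_apply,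
      norm_one, mul_one] at hmain
    have hcontra : N * Real.exp (-α * z ^ 2) * Real.exp (β * z) < 1 := by
      rw [mul_assoc, ← Real.exp_add]
      have hlt : Real.exp (-α * z ^ 2 + β * z) < Real.exp (-Real.log N) := by
        rw [Real.exp_lt_exp]; linarith
      calc N * Real.exp (-α * z ^ 2 + β * z) < N * Real.exp (-Real.log N) :=
            mul_lt_mul_of_pos_left hlt hN0
        _ = 1 := by rw [Real.exp_neg, Real.exp_log hN0, mul_inv_cancel₀ (ne_of_gt hN0)]
    linarith
end
end
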